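/- Let k, l, p, q, α, γ be natural numbers, set n = k + l, and let M11 : Matrix (Fin α) (Fin p), M12 : Matrix (Fin α) (Fin q), M13 : Matrix (Fin α) (Fin n), M22 : Matrix (Fin k) (Fin q), M23 : Matrix (Fin k) (Fin n), M31 : Matrix (Fin γ) (Fin p), M32 : Matrix (Fin γ) (Fin q), C : Matrix (Fin k) (Fin p), M43 : Matrix (Fin n) (Fin n) be matrices over ZMod 2. Let M41 : Matrix (Fin n) (Fin p) be the vertical stack of C on top of the l × p zero matrix. Suppose M43 is invertible, the first k columns of M13 * M43⁻¹ are all zero, and the first k columns of M23 * M43⁻¹ form the k × k identity matrix. Let A be the (α+k+γ+n) × (p+q+n) block matrix with block rows [M11 M12 M13], [0 M22 M23], [M31 M32 0], [M41 0 M43], and let B be the (α+k+γ) × (p+q) block matrix with block rows [M11 M12], [C M22], [M31 M32]. Then Matrix.rank A = Matrix.rank B + n. -/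

import Mathlib

open Matrix Module

/-!
Moving the block row `[M41 0 M43]` to the bottom turns the matrix into a `2 × 2` block matrix
whose bottom-right corner `M43` is invertible, so its rank is `n` plus the rank of the Schur
complement. The hypotheses on `M13 * M43⁻¹` and `M23 * M43⁻¹` make the correction term of the
Schur complement equal to `C` in the `k` rows of `M22` and zero elsewhere; over `ZMod 2`,
subtracting it replaces the zero block below `M11` by `C`, which gives `B`.
-/

theorem Submodule.finrank_prod {K M₁ M₂ : Type*} [Field K] [AddCommGroup M₁] [AddCommGroup M₂]
    [Module K M₁] [Module K M₂] [FiniteDimensional K M₁] [FiniteDimensional K M₂]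
    (p : Submodule K M₁) (q : Submodule K M₂) :
    finrank K (p.prod q) = finrank K p + finrank K q := by
  have hinj : Function.Injective (p.subtype.prodMap q.subtype) :=
    Prod.map_injective.mpr ⟨p.injective_subtype, q.injective_subtype⟩
  rw [← Module.finrank_prod, (LinearEquiv.ofInjective _ hinj).finrank_eq, LinearMap.range_prodMap,
    Submodule.range_subtype, Submodule.range_subtype]

namespace Matrix

theorem mul_fromRows_zero {R m n₁ n₂ p : Type*} [Semiring R] [Fintype n₁] [Fintype n₂]
    (X : Matrix m (n₁ ⊕ n₂) R) (C : Matrix n₁ p R) :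
    X * fromRows C (0 : Matrix n₂ p R) = X.submatrix id Sum.inl * C := by
  rw [← fromCols_toCols X, fromCols_mul_fromRows, Matrix.mul_zero, add_zero]
  rfl

theorem mulVecLin_fromBlocks_zero_zero {R l m n o : Type*} [CommSemiring R] [Fintype m]
    [Fintype o] (A : Matrix l m R) (D : Matrix n o R) :
    (fromBlocks A 0 0 D).mulVecLin =
      (LinearEquiv.sumArrowLequivProdArrow l n R R).symm.toLinearMap ∘ₗ
        A.mulVecLin.prodMap D.mulVecLin ∘ₗ
          (LinearEquiv.sumArrowLequivProdArrow m o R R).toLinearMap := by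
  ext v (i | i) <;> simp [fromBlocks_mulVec, LinearEquiv.sumArrowLequivProdArrow,
    Equiv.sumArrowEquivProdArrow]

variable {K : Type*} [Field K] {l m n o : Type*} [Fintype l] [Fintype m] [Fintype n] [Fintype o]

theorem rank_fromBlocks_zero_zero (A : Matrix l m K) (D : Matrix n o K) :
    (fromBlocks A 0 0 D).rank = A.rank + D.rank := by
  rw [rank, mulVecLin_fromBlocks_zero_zero, LinearMap.range_comp, LinearMap.range_comp,
    LinearEquiv.range, Submodule.map_top, LinearMap.range_prodMap, LinearEquiv.finrank_map_eq,
    Submodule.finrank_prod, rank, rank]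

variable [DecidableEq l] [DecidableEq m] [DecidableEq n]

theorem rank_fromBlocks_of_isUnit₂₂ (A : Matrix l m K) (B : Matrix l n K) (C : Matrix n m K)
    (D : Matrix n n K) (hD : IsUnit D) :
    (fromBlocks A B C D).rank = (A - B * D⁻¹ * C).rank + Fintype.card n := by
  have : Invertible D := hD.invertible
  rw [fromBlocks_eq_of_invertible₂₂, invOf_eq_nonsing_inv,
    rank_mul_eq_left_of_isUnit_det _ _ (by simp),
    rank_mul_eq_right_of_isUnit_det _ _ (by simp),
    rank_fromBlocks_zero_zero, rank_of_isUnit D hD]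

end Matrix

/-- The block-elimination step actually verified in the proof of the main theorem,
with `M41` the vertical stack of `C` on top of a zero matrix, the first `k` columns of
`M13 * M43⁻¹` zero and the first `k` columns of `M23 * M43⁻¹` the identity. -/
theorem stmt_2 (k l p q α γ : ℕ)
    (M11 : Matrix (Fin α) (Fin p) (ZMod 2)) (M12 : Matrix (Fin α) (Fin q) (ZMod 2))
    (M13 : Matrix (Fin α) (Fin k ⊕ Fin l) (ZMod 2))
    (M22 : Matrix (Fin k) (Fin q) (ZMod 2))
    (M23 : Matrix (Fin k) (Fin k ⊕ Fin l) (ZMod 2))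
    (M31 : Matrix (Fin γ) (Fin p) (ZMod 2)) (M32 : Matrix (Fin γ) (Fin q) (ZMod 2))
    (C : Matrix (Fin k) (Fin p) (ZMod 2))
    (M43 : Matrix (Fin k ⊕ Fin l) (Fin k ⊕ Fin l) (ZMod 2))
    (hM43 : IsUnit M43)
    (h13 : (M13 * M43⁻¹).submatrix id Sum.inl = 0)
    (h23 : (M23 * M43⁻¹).submatrix id Sum.inl = (1 : Matrix (Fin k) (Fin k) (ZMod 2))) :
    Matrix.rank
      (Matrix.fromRows
        (Matrix.fromRows
          (Matrix.fromCols (Matrix.fromCols M11 M12) M13)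
          (Matrix.fromCols (Matrix.fromCols 0 M22) M23))
        (Matrix.fromRows
          (Matrix.fromCols (Matrix.fromCols M31 M32) 0)
          (Matrix.fromCols (Matrix.fromCols (Matrix.fromRows C 0) 0) M43))) =
    Matrix.rank
      (Matrix.fromRows
        (Matrix.fromRows
          (Matrix.fromCols M11 M12)
          (Matrix.fromCols C M22))
        (Matrix.fromCols M31 M32)) + (k + l) := by
  set X : Matrix ((Fin α ⊕ Fin k) ⊕ Fin γ) (Fin p ⊕ Fin q) (ZMod 2) :=
    fromRows (fromRows (fromCols M11 M12) (fromCols 0 M22)) (fromCols M31 M32)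
  set E : Matrix ((Fin α ⊕ Fin k) ⊕ Fin γ) (Fin k ⊕ Fin l) (ZMod 2) :=
    fromRows (fromRows M13 M23) 0
  set Z : Matrix (Fin k ⊕ Fin l) (Fin p ⊕ Fin q) (ZMod 2) := fromCols (fromRows C 0) 0
  have hcorrection : E * M43⁻¹ * Z = fromRows (fromCols (fromRows 0 C) 0) 0 := by
    rw [fromRows_mul, fromRows_mul, mul_fromCols, fromRows_mul, fromRows_mul,
      mul_fromRows_zero, mul_fromRows_zero, h13, h23]
    simp
  calc _ = (fromBlocks X E Z M43).rank := by
        rw [← rank_submatrix (fromBlocks X E Z M43) (Equiv.sumAssoc _ _ _).symm (Equiv.refl _)]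
        congr 1
        ext ((i | i) | i | i) ((j | j) | j) <;> simp [X, E, Z]
    _ = (X - E * M43⁻¹ * Z).rank + (k + l) := by
        rw [rank_fromBlocks_of_isUnit₂₂ _ _ _ _ hM43, Fintype.card_sum, Fintype.card_fin,
          Fintype.card_fin]
    _ = _ := by
        rw [hcorrection]
        congr 2
        ext ((i | i) | i) (j | j) <;> simp [X]
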